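/- arXiv:1305.3934 — 4 statements merged into one kernel-verified Lean document; each statement's English description precedes it below -/
import Mathlib

section
/- Under the hypothesis min_i v_i ≥ (1 + ‖h‖²P)/a_max² for all i = 1,…,M_s, the rank-one upper bound C̄₁ = κ/(M_s+1)·[Σᵢ log((‖h‖²P + 1 + a_max²vᵢ)/(a_max²vᵢ)) + log(1 + ‖h‖²P)] satisfies C̄₁ − κ/(M_s+1)·log(1+‖h‖²P) ≤ κ·M_s/(M_s+1). -/
open Real

lemma logb_two_add_div_self_le_one {c x : ℝ} (hc : 0 ≤ c) (hcx : c ≤ x) :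
    logb 2 ((c + x) / x) ≤ 1 := by
  obtain rfl | hx := (hc.trans hcx).eq_or_lt
  · simp
  calc logb 2 ((c + x) / x) ≤ logb 2 2 :=
        logb_le_logb_of_le one_lt_two (by positivity) (by rw [div_le_iff₀ hx]; linarith)
    _ = 1 := logb_self_eq_one one_lt_two

theorem rankOne_bound_gap_general (Ms : ℕ) (κ P hsq amax : ℝ)
    (v : Fin Ms → ℝ) (hκ : 0 < κ) (hP : 0 ≤ P) (hhsq : 0 ≤ hsq)
    (hamax : 0 < amax)
    (hmin : ∀ i, (1 + hsq * P) / amax ^ 2 ≤ v i) :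
    (κ / ((Ms : ℝ) + 1)) *
        ((∑ i, Real.logb 2 ((hsq * P + 1 + amax ^ 2 * v i) / (amax ^ 2 * v i)))
          + Real.logb 2 (1 + hsq * P))
      - (κ / ((Ms : ℝ) + 1)) * Real.logb 2 (1 + hsq * P)
      ≤ κ * (Ms : ℝ) / ((Ms : ℝ) + 1) := by
  have hnoise : 0 ≤ hsq * P + 1 := by positivity
  have hterm : ∀ i, logb 2 ((hsq * P + 1 + amax ^ 2 * v i) / (amax ^ 2 * v i)) ≤ 1 := by
    intro i
    have hvi := hmin i
    rw [div_le_iff₀ (by positivity)] at hvi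
    exact logb_two_add_div_self_le_one hnoise (by linarith)
  have hsum : ∑ i, logb 2 ((hsq * P + 1 + amax ^ 2 * v i) / (amax ^ 2 * v i)) ≤ Ms := by
    simpa using Finset.sum_le_card_nsmul Finset.univ _ _ fun i _ => hterm i
  rw [mul_add, add_sub_cancel_right, ← div_mul_eq_mul_div]
  exact mul_le_mul_of_nonneg_left hsum (by positivity)

/-- Remark 5's gap bound: under `vᵢ ≥ (1 + ‖h‖²P)/a_max²`, the rank-one upper
bound `C̄₁` exceeds its prelog approximation `κ/(Ms+1)·log₂(1+‖h‖²P)` by at most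
`κ·Ms/(Ms+1)` bits. -/
theorem rankOne_bound_gap (Ms : ℕ) (hMs : 1 ≤ Ms) (κ P hsq amax : ℝ)
    (v : Fin Ms → ℝ) (hκ : 0 < κ) (hP : 0 ≤ P) (hhsq : 0 ≤ hsq)
    (hamax : 0 < amax) (hv : ∀ i, 0 < v i)
    (hmin : ∀ i, (1 + hsq * P) / amax ^ 2 ≤ v i) :
    (κ / ((Ms : ℝ) + 1)) *
        ((∑ i, Real.logb 2 ((hsq * P + 1 + amax ^ 2 * v i) / (amax ^ 2 * v i)))
          + Real.logb 2 (1 + hsq * P))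
      - (κ / ((Ms : ℝ) + 1)) * Real.logb 2 (1 + hsq * P)
      ≤ κ * (Ms : ℝ) / ((Ms : ℝ) + 1) :=
  rankOne_bound_gap_general Ms κ P hsq amax v hκ hP hhsq hamax hmin
end

section
/- For PSD matrices B, C ⪰ 0 of size n with C ≻ 0, the function a ↦ log det(I + B + a·C) − log det(a·C) is strictly decreasing in a > 0 and tends to 0 as a → ∞ (for fixed, bounded B). -/
open Matrix Filter

lemma det_add_smul_one' {m : Type*} [Fintype m] [DecidableEq m]
    {N : Matrix m m ℝ} (hN : N.IsHermitian) (a : ℝ) :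
    (N + a • 1).det = ∏ i, (hN.eigenvalues i + a) := by
  set U : Matrix m m ℝ := (hN.eigenvectorUnitary : Matrix m m ℝ) with hUdef
  have hU : U * star U = 1 := Matrix.mem_unitaryGroup_iff.mp hN.eigenvectorUnitary.2
  have hU' : star U * U = 1 := Matrix.mem_unitaryGroup_iff'.mp hN.eigenvectorUnitary.2
  have hdiag : RCLike.ofReal ∘ hN.eigenvalues = hN.eigenvalues := by
    funext i; simp
  have key : N + a • 1 = U * (diagonal hN.eigenvalues + a • 1) * star U := by
    have h := hN.spectral_theorem
    rw [Unitary.conjStarAlgAut_apply] at h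
    rw [mul_add, add_mul, ← hdiag, ← h]
    congr 1
    rw [Matrix.mul_smul, Matrix.smul_mul, Matrix.mul_one, hU]
  rw [key, det_mul, det_mul, mul_comm, ← mul_assoc, ← det_mul, hU', det_one, one_mul,
    smul_one_eq_diagonal, diagonal_add, det_diagonal]

/-- Remark 3 made precise: for `B ⪰ 0` and `C ≻ 0`, the function
`a ↦ log det(I + B + aC) − log det(aC)` is strictly decreasing on `(0,∞)` and
tends to `0` as `a → ∞`. -/
theorem logdet_gap_strictAnti_and_vanishes (n : ℕ) (hn : 0 < n)
    (B C : Matrix (Fin n) (Fin n) ℝ) (hB : B.PosSemidef) (hC : C.PosDef) :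
    StrictAntiOn (fun a : ℝ =>
        Real.log ((1 + B + a • C).det) - Real.log ((a • C).det))
      (Set.Ioi (0 : ℝ)) ∧
    Tendsto (fun a : ℝ =>
        Real.log ((1 + B + a • C).det) - Real.log ((a • C).det))
      atTop (nhds 0) := by
  haveI : Nonempty (Fin n) := Fin.pos_iff_nonempty.mp hn
  set S := (open scoped MatrixOrder in CFC.sqrt C) with hSdef
  have hS : S * S = C := by
    open scoped MatrixOrder in exact CFC.sqrt_mul_sqrt_self C hC.posSemidef.nonneg
  have hCdetpos : 0 < C.det := hC.det_pos
  have hdetS : S.det * S.det = C.det := by rw [← det_mul, hS]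
  have hdetSne : S.det ≠ 0 := by
    intro h; rw [h, mul_zero] at hdetS; exact hCdetpos.ne' hdetS.symm
  have hSunit : IsUnit S.det := hdetSne.isUnit
  have hSinv : S * S⁻¹ = 1 := mul_nonsing_inv S hSunit
  have hSinv' : S⁻¹ * S = 1 := nonsing_inv_mul S hSunit
  have h1B : ((1 : Matrix (Fin n) (Fin n) ℝ) + B).PosDef :=
    Matrix.PosDef.add_posSemidef Matrix.PosDef.one hB
  set N := S⁻¹ * ((1 : Matrix (Fin n) (Fin n) ℝ) + B) * S⁻¹ with hNdef
  have hNpsd : N.PosSemidef := by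
    have h := h1B.posSemidef.conjTranspose_mul_mul_same (S⁻¹)
    have hc : (S⁻¹)ᴴ = S⁻¹ := by
      open scoped MatrixOrder in
      rw [conjTranspose_nonsing_inv, (CFC.sqrt_nonneg C).posSemidef.isHermitian.eq]
    rwa [hc] at h
  have hNherm := hNpsd.isHermitian
  set μ := hNherm.eigenvalues with hμdef
  have hdetNne : N.det ≠ 0 := by
    have : N.det = (S.det)⁻¹ * ((1 : Matrix (Fin n) (Fin n) ℝ) + B).det * (S.det)⁻¹ := by
      rw [hNdef, det_mul, det_mul, det_nonsing_inv, Ring.inverse_eq_inv']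
    rw [this]
    exact mul_ne_zero (mul_ne_zero (inv_ne_zero hdetSne) h1B.det_pos.ne') (inv_ne_zero hdetSne)
  have hμpos : ∀ i, 0 < μ i := by
    intro i
    rcases (hNpsd.eigenvalues_nonneg i).lt_or_eq with h | h
    · exact h
    · exfalso
      apply hdetNne
      have hd := hNherm.det_eq_prod_eigenvalues
      rw [hd]
      exact Finset.prod_eq_zero (Finset.mem_univ i) (by exact_mod_cast h.symm)
  have key : ∀ a : ℝ, ((1 : Matrix (Fin n) (Fin n) ℝ) + B + a • C).det
      = C.det * ∏ i, (μ i + a) := by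
    intro a
    have h1 : S * N * S = (1 : Matrix (Fin n) (Fin n) ℝ) + B := by
      rw [hNdef]
      rw [← Matrix.mul_assoc, ← Matrix.mul_assoc, hSinv, Matrix.one_mul, Matrix.mul_assoc,
        hSinv', Matrix.mul_one]
    have h2 : S * (a • (1 : Matrix (Fin n) (Fin n) ℝ)) * S = a • C := by
      rw [Matrix.mul_smul, Matrix.mul_one, Matrix.smul_mul, hS]
    have hmat : (1 : Matrix (Fin n) (Fin n) ℝ) + B + a • C = S * (N + a • 1) * S := by
      rw [mul_add, add_mul, h1, h2]
    rw [hmat, det_mul, det_mul, det_add_smul_one' hNherm a, mul_right_comm, hdetS]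
  have hdetaC : ∀ a : ℝ, (a • C).det = a ^ n * C.det := by
    intro a; rw [det_smul, Fintype.card_fin]
  have hfg : ∀ a ∈ Set.Ioi (0 : ℝ),
      Real.log ((1 + B + a • C).det) - Real.log ((a • C).det)
        = ∑ i, (Real.log (μ i + a) - Real.log a) := by
    intro a ha
    have ha : (0 : ℝ) < a := ha
    have hterm : ∀ i, 0 < μ i + a := fun i => add_pos (hμpos i) ha
    rw [key a, hdetaC a, Real.log_mul hCdetpos.ne'
        (Finset.prod_pos fun i _ => hterm i).ne',
      Real.log_mul (pow_ne_zero n ha.ne') hCdetpos.ne',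
      Real.log_prod (fun i _ => (hterm i).ne'), Real.log_pow,
      Finset.sum_sub_distrib, Finset.sum_const, Finset.card_univ, Fintype.card_fin,
      nsmul_eq_mul]
    ring
  constructor
  · intro a ha b hb hab
    simp only [hfg a ha, hfg b hb]
    apply Finset.sum_lt_sum_of_nonempty Finset.univ_nonempty
    intro i _
    have hμ := hμpos i
    have ha' : (0 : ℝ) < a := ha
    have hb' : (0 : ℝ) < b := hb
    rw [← Real.log_div (add_pos hμ hb').ne' hb'.ne',
      ← Real.log_div (add_pos hμ ha').ne' ha'.ne']
    apply Real.log_lt_log (by positivity)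
    rw [add_div, add_div, div_self hb'.ne', div_self ha'.ne']
    exact add_lt_add_left (div_lt_div_of_pos_left hμ ha' hab) 1
  · have hev : (fun a : ℝ => Real.log ((1 + B + a • C).det) - Real.log ((a • C).det))
        =ᶠ[atTop] fun a => ∑ i, (Real.log (μ i + a) - Real.log a) := by
      filter_upwards [eventually_gt_atTop 0] with a ha using hfg a ha
    rw [Filter.tendsto_congr' hev]
    have h0 : (0 : ℝ) = ∑ _i : Fin n, (0 : ℝ) := by simp
    rw [h0]
    apply tendsto_finset_sum
    intro i _
    have h1 : Tendsto (fun a : ℝ => (μ i + a) / a) atTop (nhds 1) := by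
      have h2 : Tendsto (fun a : ℝ => μ i / a + 1) atTop (nhds 1) := by
        simpa using (tendsto_const_nhds.div_atTop tendsto_id).add
          (tendsto_const_nhds : Tendsto (fun _ : ℝ => (1:ℝ)) atTop (nhds 1))
      apply h2.congr'
      filter_upwards [eventually_gt_atTop 0] with a ha
      rw [add_div, div_self ha.ne']
    have h2 : Tendsto (fun a : ℝ => Real.log ((μ i + a) / a)) atTop (nhds 0) := by
      have := (Real.continuousAt_log one_ne_zero).tendsto.comp h1
      simpa [Function.comp_def] using this
    apply h2.congr'
    filter_upwards [eventually_gt_atTop 0] with a ha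
    rw [Real.log_div (add_pos (hμpos i) ha).ne' ha.ne']
end

section
/- If H Q_x H† ⪯ β · A Q_s A† (Loewner order) for PSD matrices, then log det(U(H Q_x H† + A Q_s A† ) U† + I) − log det(U A Q_s A† U†) ≤ log det((1+β)·U A Q_s A† U† + I) − log det(U A Q_s A† U†), and when U A Q_s A† U† ⪰ c·I with c > 0 this difference is at most n·log(1 + β + 1/c). -/
/-! Both bounds come from the monotonicity of `log det` in the Loewner order on positive definite
matrices: if `0 ≺ M ⪯ N` then `N = √M (1 + Q) √M` with `Q ⪰ 0`, and every eigenvalue of `1 + Q` is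
at least `1`. Conjugating the hypothesis by `U` gives `B + S + 1 ⪯ (1 + β) S + 1`, and `S ⪰ c • 1`
gives `1 ⪯ S / c`, hence `(1 + β) S + 1 ⪯ (1 + β + 1/c) S`, whose `log det` is
`n log (1 + β + 1/c) + log det S`. -/

open Matrix

namespace Matrix

variable {m n : Type*}

lemma PosSemidef.mul_mul_transpose_same [Fintype m] [Fintype n] {A : Matrix n n ℝ}
    (hA : A.PosSemidef) (B : Matrix m n ℝ) : (B * A * Bᵀ).PosSemidef := by
  simpa using hA.mul_mul_conjTranspose_same B

lemma PosSemidef.posDef_of_sub_smul_one [DecidableEq n] {M : Matrix n n ℝ} {c : ℝ} (hc : 0 < c)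
    (h : (M - c • 1).PosSemidef) : M.PosDef := by
  simpa using PosDef.posSemidef_add h (PosDef.one.smul hc)

variable [Fintype n] [DecidableEq n]

lemma IsHermitian.le_eigenvalues_of_sub_smul_one {M : Matrix n n ℝ} (hM : M.IsHermitian)
    {c : ℝ} (h : (M - c • 1).PosSemidef) (i : n) : c ≤ hM.eigenvalues i := by
  open scoped MatrixOrder in
  have hle : algebraMap ℝ (Matrix n n ℝ) c ≤ M := by
    rw [Algebra.algebraMap_eq_smul_one]; exact h
  exact (algebraMap_le_iff_le_spectrum hM.isSelfAdjoint).1 hle _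
    (hM.eigenvalues_mem_spectrum_real i)

lemma PosSemidef.one_le_det_one_add {Q : Matrix n n ℝ} (hQ : Q.PosSemidef) :
    1 ≤ (1 + Q).det := by
  have hH : (1 + Q).IsHermitian := isHermitian_one.add hQ.1
  rw [hH.det_eq_prod_eigenvalues]
  exact Finset.one_le_prod fun i _ => hH.le_eigenvalues_of_sub_smul_one (by simpa using hQ) i

open scoped MatrixOrder in
lemma PosDef.det_le_det_of_sub_posSemidef {M N : Matrix n n ℝ} (hM : M.PosDef)
    (h : (N - M).PosSemidef) : M.det ≤ N.det := by
  set R := CFC.sqrt M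
  have hRR : R * R = M := CFC.sqrt_mul_sqrt_self M hM.posSemidef.nonneg
  have hR : IsUnit R.det := by
    refine isUnit_iff_ne_zero.mpr fun h0 => hM.det_pos.ne' ?_
    rw [← hRR, det_mul, h0, zero_mul]
  have hQ : (R⁻¹ * (N - M) * R⁻¹).PosSemidef := by
    have hRinv : R⁻¹ᵀ = R⁻¹ := (CFC.sqrt_nonneg M).posSemidef.1.inv.eq
    simpa [hRinv] using h.mul_mul_transpose_same R⁻¹
  have hN : N = R * (1 + R⁻¹ * (N - M) * R⁻¹) * R := by
    rw [mul_add, add_mul, mul_one, hRR, ← mul_assoc, ← mul_assoc, mul_nonsing_inv _ hR, one_mul,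
      mul_assoc, nonsing_inv_mul _ hR, mul_one, add_sub_cancel]
  have hdet : N.det = M.det * (1 + R⁻¹ * (N - M) * R⁻¹).det := by
    conv_lhs => rw [hN]
    rw [← hRR, det_mul, det_mul, det_mul]; ring
  rw [hdet]
  exact le_mul_of_one_le_right hM.det_pos.le hQ.one_le_det_one_add

lemma PosDef.log_det_le_log_det_of_sub_posSemidef {M N : Matrix n n ℝ} (hM : M.PosDef)
    (h : (N - M).PosSemidef) : Real.log M.det ≤ Real.log N.det :=
  Real.log_le_log hM.det_pos (hM.det_le_det_of_sub_posSemidef h)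

lemma PosDef.log_det_smul {S : Matrix n n ℝ} (hS : S.PosDef) {k : ℝ} (hk : 0 < k) :
    Real.log (k • S).det = Fintype.card n * Real.log k + Real.log S.det := by
  rw [det_smul, Real.log_mul (by positivity) hS.det_pos.ne', Real.log_pow]

end Matrix

/-- The key bounding step in the proof of Corollary 2: if
`H Qx Hᵀ ⪯ β · A Qs Aᵀ` in the Loewner order, then the interference term of the
capacity bound is controlled, and when `U A Qs Aᵀ Uᵀ ⪰ c·I` it is at most
`n·log(1 + β + 1/c)`. -/
theorem interference_term_bounded (n Mt Mr Ms : ℕ)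
    (H : Matrix (Fin Mr) (Fin Mt) ℝ) (Qx : Matrix (Fin Mt) (Fin Mt) ℝ)
    (A : Matrix (Fin Mr) (Fin Ms) ℝ) (Qs : Matrix (Fin Ms) (Fin Ms) ℝ)
    (U : Matrix (Fin n) (Fin Mr) ℝ) (β c : ℝ)
    (hQx : Qx.PosSemidef) (hQs : Qs.PosSemidef) (hβ : 0 ≤ β) (hc : 0 < c)
    (hLoewner : (β • (A * Qs * Aᵀ) - H * Qx * Hᵀ).PosSemidef)
    (hS : (U * (A * Qs * Aᵀ) * Uᵀ - c • 1).PosSemidef) :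
    (Real.log ((U * (H * Qx * Hᵀ + A * Qs * Aᵀ) * Uᵀ + 1).det)
        - Real.log ((U * (A * Qs * Aᵀ) * Uᵀ).det)
      ≤ Real.log (((1 + β) • (U * (A * Qs * Aᵀ) * Uᵀ) + 1).det)
        - Real.log ((U * (A * Qs * Aᵀ) * Uᵀ).det)) ∧
    (Real.log ((U * (H * Qx * Hᵀ + A * Qs * Aᵀ) * Uᵀ + 1).det)
        - Real.log ((U * (A * Qs * Aᵀ) * Uᵀ).det)
      ≤ (n : ℝ) * Real.log (1 + β + 1 / c)) := by
  set S := U * (A * Qs * Aᵀ) * Uᵀ with hS_def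
  have hS_pos : S.PosDef := hS.posDef_of_sub_smul_one hc
  have hTotal : (U * (H * Qx * Hᵀ + A * Qs * Aᵀ) * Uᵀ + 1).PosDef :=
    PosDef.posSemidef_add (((hQx.mul_mul_transpose_same H).add
      (hQs.mul_mul_transpose_same A)).mul_mul_transpose_same U) PosDef.one
  have hInterference : Real.log (U * (H * Qx * Hᵀ + A * Qs * Aᵀ) * Uᵀ + 1).det
      ≤ Real.log ((1 + β) • S + 1).det := by
    refine hTotal.log_det_le_log_det_of_sub_posSemidef ?_
    have hdiff : (1 + β) • S + 1 - (U * (H * Qx * Hᵀ + A * Qs * Aᵀ) * Uᵀ + 1)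
        = U * (β • (A * Qs * Aᵀ) - H * Qx * Hᵀ) * Uᵀ := by
      simp only [hS_def, Matrix.mul_add, Matrix.add_mul, Matrix.mul_sub, Matrix.sub_mul,
        Matrix.mul_smul, Matrix.smul_mul]
      module
    rw [hdiff]
    exact hLoewner.mul_mul_transpose_same U
  have hNoise : Real.log ((1 + β) • S + 1).det ≤ Real.log ((1 + β + 1 / c) • S).det := by
    refine (PosDef.posSemidef_add (hS_pos.posSemidef.smul (by linarith : (0 : ℝ) ≤ 1 + β))
      PosDef.one).log_det_le_log_det_of_sub_posSemidef ?_
    have hdiff : (1 + β + 1 / c) • S - ((1 + β) • S + 1) = (1 / c) • (S - c • 1) := by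
      rw [smul_sub, smul_smul, one_div_mul_cancel hc.ne', one_smul, add_smul]
      abel
    rw [hdiff]
    exact hS.smul (by positivity)
  rw [hS_pos.log_det_smul (by positivity), Fintype.card_fin] at hNoise
  exact ⟨by linarith, by linarith⟩
end

section
/- For the scalar compound dirty paper channel (M_s = M_t = M_r = 1), the upper bound specializes to C̄₁ = (κ/2)·[log((h²P + 1 + a_max²·q_s)/(a_max²·q_s)) + log(1 + h²P)], and the gap between C̄₁ and (κ/2)·log(1+h²P) is at most (κ/2)·log(1 + (h²P+1)/(a_max²·q_s)); in particular the gap tends to 0 as a_max → ∞. -/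
open Filter Topology

lemma tendsto_div_sq_mul_const_atTop (c : ℝ) {q : ℝ} (hq : 0 < q) :
    Tendsto (fun a : ℝ => c / (a ^ 2 * q)) atTop (𝓝 0) :=
  tendsto_const_nhds.div_atTop ((tendsto_pow_atTop two_ne_zero).atTop_mul_const hq)

lemma Filter.Tendsto.logb_one_add {α : Type*} {l : Filter α} {f : α → ℝ} (b : ℝ)
    (hf : Tendsto f l (𝓝 0)) : Tendsto (fun x => Real.logb b (1 + f x)) l (𝓝 0) := by
  simpa using (tendsto_const_nhds.add hf).logb (b := b) (x := 1 + 0) (by norm_num)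

theorem scalar_bound_gap_general (h P qs κ : ℝ) (hqs : 0 < qs) :
    (∀ a : ℝ, 0 < a →
      (κ / 2) * (Real.logb 2 ((h ^ 2 * P + 1 + a ^ 2 * qs) / (a ^ 2 * qs))
          + Real.logb 2 (1 + h ^ 2 * P))
        - (κ / 2) * Real.logb 2 (1 + h ^ 2 * P)
        ≤ (κ / 2) * Real.logb 2 (1 + (h ^ 2 * P + 1) / (a ^ 2 * qs))) ∧
    Tendsto (fun a : ℝ =>
        (κ / 2) * (Real.logb 2 ((h ^ 2 * P + 1 + a ^ 2 * qs) / (a ^ 2 * qs))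
            + Real.logb 2 (1 + h ^ 2 * P))
          - (κ / 2) * Real.logb 2 (1 + h ^ 2 * P))
      atTop (nhds 0) := by
  have gap_eq : ∀ a : ℝ, 0 < a →
      (κ / 2) * (Real.logb 2 ((h ^ 2 * P + 1 + a ^ 2 * qs) / (a ^ 2 * qs))
          + Real.logb 2 (1 + h ^ 2 * P))
        - (κ / 2) * Real.logb 2 (1 + h ^ 2 * P)
        = (κ / 2) * Real.logb 2 (1 + (h ^ 2 * P + 1) / (a ^ 2 * qs)) := by
    intro a ha
    rw [div_add_same (by positivity), add_comm _ (1 : ℝ)]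
    ring
  refine ⟨fun a ha => (gap_eq a ha).le, ?_⟩
  have bound_tendsto :=
    ((tendsto_div_sq_mul_const_atTop (h ^ 2 * P + 1) hqs).logb_one_add 2).const_mul (κ / 2)
  rw [mul_zero] at bound_tendsto
  exact bound_tendsto.congr' <| (eventually_gt_atTop 0).mono fun a ha => (gap_eq a ha).symm

/-- Scalar compound dirty paper channel: the gap between the specialized upper
bound `C̄₁ = (κ/2)[log₂((h²P+1+a²q)/(a²q)) + log₂(1+h²P)]` and the prelog
approximation `(κ/2)·log₂(1+h²P)` is at most
`(κ/2)·log₂(1 + (h²P+1)/(a²q))`, and it tends to `0` as `a_max → ∞`. -/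
theorem scalar_bound_gap (h P qs κ : ℝ) (hP : 0 < P) (hqs : 0 < qs)
    (hκ : κ = 1 / 2 ∨ κ = 1) :
    (∀ a : ℝ, 0 < a →
      (κ / 2) * (Real.logb 2 ((h ^ 2 * P + 1 + a ^ 2 * qs) / (a ^ 2 * qs))
          + Real.logb 2 (1 + h ^ 2 * P))
        - (κ / 2) * Real.logb 2 (1 + h ^ 2 * P)
        ≤ (κ / 2) * Real.logb 2 (1 + (h ^ 2 * P + 1) / (a ^ 2 * qs))) ∧
    Tendsto (fun a : ℝ =>
        (κ / 2) * (Real.logb 2 ((h ^ 2 * P + 1 + a ^ 2 * qs) / (a ^ 2 * qs))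
            + Real.logb 2 (1 + h ^ 2 * P))
          - (κ / 2) * Real.logb 2 (1 + h ^ 2 * P))
      atTop (nhds 0) :=
  scalar_bound_gap_general h P qs κ hqs
end
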